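/- Let f, f' : X → X' be continuous maps and k : Z → X a continuous map admitting a continuous right homotopy inverse k' : X → Z (i.e. k ∘ k' ≃ 1_X). Then D(f ∘ k, f' ∘ k) = D(f, f'). -/

import Mathlib

/-- The (higher) homotopic distance of a family of continuous maps `f i : X → Y`:
the least `l` such that `X` admits an open cover by `l` open sets on each of which
all the maps restrict to pairwise homotopic maps (`∞` if no such cover exists). -/
noncomputable def homDist {X Y : Type*} [TopologicalSpace X] [TopologicalSpace Y]
    {k : ℕ} (f : Fin k → C(X, Y)) : ℕ∞ :=
  sInf ((fun n : ℕ => (n : ℕ∞)) '' {n : ℕ | ∃ U : Fin n → Set X,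
    (∀ j, IsOpen (U j)) ∧ (⋃ j, U j) = Set.univ ∧
    ∀ j i i', ((f i).restrict (U j)).Homotopic ((f i').restrict (U j))})

/-- Homotopic distance of two maps. -/
noncomputable def homDist2 {X Y : Type*} [TopologicalSpace X] [TopologicalSpace Y]
    (f g : C(X, Y)) : ℕ∞ :=
  homDist ![f, g]

/-! Precomposition can only decrease the homotopic distance, since an admissible cover pulls
back along the precomposed map, and the distance depends only on the homotopy classes of the
maps. Hence `D(f, f') = D(f ∘ k ∘ k', f' ∘ k ∘ k') ≤ D(f ∘ k, f' ∘ k) ≤ D(f, f')`. -/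

namespace ContinuousMap

variable {X Y Z : Type*} [TopologicalSpace X] [TopologicalSpace Y] [TopologicalSpace Z]

theorem Homotopic.restrict {f g : C(X, Y)} (h : f.Homotopic g) (U : Set X) :
    (f.restrict U).Homotopic (g.restrict U) :=
  h.comp (Homotopic.refl ⟨Subtype.val, continuous_subtype_val⟩)

theorem Homotopic.comp_right_homotopy_inverse {k : C(Z, X)} {k' : C(X, Z)}
    (h : (k.comp k').Homotopic (ContinuousMap.id X)) (f : C(X, Y)) :
    (f.comp (k.comp k')).Homotopic f := by
  simpa using (Homotopic.refl f).comp h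

theorem restrict_comp_preimage (g : C(X, Y)) (k : C(Z, X)) (U : Set X) :
    (g.comp k).restrict (k ⁻¹' U) = (g.restrict U).comp (k.restrictPreimage U) :=
  rfl

end ContinuousMap

open ContinuousMap

section HomotopicDistance

variable {X Y Z : Type*} [TopologicalSpace X] [TopologicalSpace Y] [TopologicalSpace Z]

theorem homDist_comp_le {n : ℕ} (f : Fin n → C(X, Y)) (k : C(Z, X)) :
    homDist (fun i => (f i).comp k) ≤ homDist f := by
  apply sInf_le_sInf
  rintro _ ⟨m, ⟨U, hU_open, hU_cover, hU_homotopic⟩, rfl⟩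
  refine ⟨m, ⟨fun j => k ⁻¹' U j, fun j => (hU_open j).preimage k.continuous, ?_, ?_⟩, rfl⟩
  · rw [← Set.preimage_iUnion, hU_cover, Set.preimage_univ]
  · intro j i i'
    rw [restrict_comp_preimage, restrict_comp_preimage]
    exact (hU_homotopic j i i').comp (Homotopic.refl _)

theorem homDist_le_of_homotopic {n : ℕ} {f g : Fin n → C(X, Y)}
    (h : ∀ i, (f i).Homotopic (g i)) : homDist g ≤ homDist f := by
  apply sInf_le_sInf
  rintro _ ⟨m, ⟨U, hU_open, hU_cover, hU_homotopic⟩, rfl⟩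
  refine ⟨m, ⟨U, hU_open, hU_cover, fun j i i' => ?_⟩, rfl⟩
  exact (((h i).restrict (U j)).symm.trans (hU_homotopic j i i')).trans ((h i').restrict (U j))

theorem homDist2_comp_le (f g : C(X, Y)) (k : C(Z, X)) :
    homDist2 (f.comp k) (g.comp k) ≤ homDist2 f g := by
  have hvec : ![f.comp k, g.comp k] = fun i => (![f, g] i).comp k := by
    funext i
    fin_cases i <;> rfl
  rw [homDist2, hvec]
  exact homDist_comp_le ![f, g] k

theorem homDist2_le_of_homotopic {f g f₁ g₁ : C(X, Y)} (hf : f.Homotopic f₁)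
    (hg : g.Homotopic g₁) : homDist2 f₁ g₁ ≤ homDist2 f g :=
  homDist_le_of_homotopic fun i => by fin_cases i <;> assumption

end HomotopicDistance

theorem homDist2_comp_right_of_right_homotopy_inverse {X X' Z : Type*} [TopologicalSpace X]
    [TopologicalSpace X'] [TopologicalSpace Z] (f f' : C(X, X')) (k : C(Z, X))
    (k' : C(X, Z)) (h : (k.comp k').Homotopic (ContinuousMap.id X)) :
    homDist2 (f.comp k) (f'.comp k) = homDist2 f f' := by
  refine le_antisymm (homDist2_comp_le f f' k) ?_
  calc homDist2 f f'
      ≤ homDist2 (f.comp (k.comp k')) (f'.comp (k.comp k')) :=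
        homDist2_le_of_homotopic (h.comp_right_homotopy_inverse f)
          (h.comp_right_homotopy_inverse f')
    _ = homDist2 ((f.comp k).comp k') ((f'.comp k).comp k') := rfl
    _ ≤ homDist2 (f.comp k) (f'.comp k) := homDist2_comp_le _ _ k'
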